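/- arXiv:1112.6059 — 8 statements merged into one kernel-verified Lean document; each statement's English description precedes it below -/
import Mathlib

section
/- For integers 0 ≤ k ≤ N and 0 ≤ n ≤ N, the k-th order correlation of simple random sampling satisfies the exact formula Corr(k) = Σ_{j=0}^{k} C(k,j) · ((n)_j/(N)_j) · (−n/N)^{k−j}, where (x)_j = x(x−1)⋯(x−j+1) denotes the falling factorial with (x)_0 = 1. -/
/-!
Expanding the product over `H` writes `Corr(k)` as a sum over `t ⊆ H` of
`P(t ⊆ S) · (-n/N)^(k - #t)`, and `P(t ⊆ S) = (n)_{#t} / (N)_{#t}` depends only on `#t`: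
there are `C(N - j, n - j)` samples containing a given `j`-set.
-/

open Finset

namespace Nat

theorem choose_mul_descFactorial {N n j : ℕ} (hjn : j ≤ n) :
    N.choose n * n.descFactorial j = (N - j).choose (n - j) * N.descFactorial j := by
  rw [descFactorial_eq_factorial_mul_choose, descFactorial_eq_factorial_mul_choose,
    mul_left_comm, choose_mul hjn]
  ring

end Nat

namespace Finset

variable {α : Type*} [DecidableEq α]

/-- The inclusion probability of `t` in a uniform `n`-subset of `s`, cleared of denominators;
both sides vanish when `n < #t`. -/
theorem card_filter_powersetCard_subset_mul_descFactorial {s t : Finset α} (n : ℕ)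
    (hts : t ⊆ s) :
    #{r ∈ s.powersetCard n | t ⊆ r} * (#s).descFactorial #t =
      (#s).choose n * n.descFactorial #t := by
  rcases le_or_gt #t n with htn | hnt
  · rw [card_filter_powersetCard_subset t s n hts htn, Nat.choose_mul_descFactorial htn]
  · have hempty : #{r ∈ s.powersetCard n | t ⊆ r} = 0 := by
      rw [card_eq_zero, filter_eq_empty_iff]
      intro r hr htr
      have := card_le_card htr
      rw [(mem_powersetCard.1 hr).2] at this
      omega
    rw [hempty, Nat.descFactorial_of_lt hnt, zero_mul, mul_zero]

theorem cast_card_filter_powersetCard_subset {𝕜 : Type*} [Field 𝕜] [CharZero 𝕜]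
    {s t : Finset α} (n : ℕ) (hts : t ⊆ s) :
    (#{r ∈ s.powersetCard n | t ⊆ r} : 𝕜) =
      (#s).choose n * ((n.descFactorial #t : 𝕜) / (#s).descFactorial #t) := by
  have hdesc : ((#s).descFactorial #t : 𝕜) ≠ 0 := by
    exact_mod_cast (Nat.descFactorial_pos.2 (card_le_card hts)).ne'
  rw [mul_div_assoc', eq_div_iff hdesc]
  exact_mod_cast card_filter_powersetCard_subset_mul_descFactorial n hts

theorem prod_boole_add_eq_sum_powerset {R : Type*} [CommRing R] (H r : Finset α) (x : R) :
    ∏ A ∈ H, ((if A ∈ r then 1 else 0) + x) =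
      ∑ t ∈ H.powerset, (if t ⊆ r then 1 else 0) * x ^ (#H - #t) := by
  rw [prod_add]
  refine sum_congr rfl fun t ht => ?_
  rw [prod_boole, prod_const, card_sdiff_of_subset (mem_powerset.1 ht)]
  rfl

theorem sum_powersetCard_prod_boole_add {R : Type*} [CommRing R] (s H : Finset α) (n : ℕ)
    (x : R) :
    ∑ r ∈ s.powersetCard n, ∏ A ∈ H, ((if A ∈ r then 1 else 0) + x) =
      ∑ t ∈ H.powerset, (#{r ∈ s.powersetCard n | t ⊆ r} : R) * x ^ (#H - #t) := by
  simp_rw [prod_boole_add_eq_sum_powerset, sum_comm (s := s.powersetCard n), ← sum_mul,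
    sum_boole]

end Finset

theorem corr_formula_general (N n k : ℕ) (hn : n ≤ N)
    (H : Finset ℕ) (hH : H ⊆ Finset.range N) (hcard : H.card = k) :
    (Nat.choose N n : ℝ)⁻¹ *
        ∑ r ∈ (Finset.range N).powersetCard n,
          ∏ A ∈ H, ((if A ∈ r then (1 : ℝ) else 0) - (n : ℝ) / N) =
      ∑ j ∈ Finset.range (k + 1),
        (Nat.choose k j : ℝ) *
          ((Nat.descFactorial n j : ℝ) / (Nat.descFactorial N j : ℝ)) *
          (-(n : ℝ) / N) ^ (k - j) := by
  have hchoose : (N.choose n : ℝ) ≠ 0 := by exact_mod_cast (Nat.choose_pos hn).ne'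
  have hincl : ∀ t ∈ H.powerset, (#{r ∈ (range N).powersetCard n | t ⊆ r} : ℝ) =
      N.choose n * ((n.descFactorial #t : ℝ) / N.descFactorial #t) := fun t ht => by
    simpa using cast_card_filter_powersetCard_subset n ((mem_powerset.1 ht).trans hH)
  simp_rw [sub_eq_add_neg, ← neg_div]
  rw [sum_powersetCard_prod_boole_add, sum_congr rfl fun t ht => by rw [hincl t ht], mul_sum,
    sum_powerset, hcard]
  refine sum_congr rfl fun j _ => ?_
  rw [sum_congr rfl fun t ht => by rw [(mem_powersetCard.1 ht).2], sum_const,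
    card_powersetCard, hcard, nsmul_eq_mul]
  field_simp

/-- For integers `0 ≤ k ≤ N` and `0 ≤ n ≤ N`, the `k`-th order
correlation of simple random sampling of size `n` from the population `{1,…,N}` (here
modelled as `Finset.range N`) satisfies the exact formula
`Corr(k) = Σ_{j=0}^{k} C(k,j) · ((n)_j/(N)_j) · (−n/N)^{k−j}`,
where `(x)_j = x(x−1)⋯(x−j+1)` is the falling factorial (`Nat.descFactorial`). -/
theorem corr_formula (N n k : ℕ) (hk : k ≤ N) (hn : n ≤ N)
    (H : Finset ℕ) (hH : H ⊆ Finset.range N) (hcard : H.card = k) :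
    (Nat.choose N n : ℝ)⁻¹ *
        ∑ r ∈ (Finset.range N).powersetCard n,
          ∏ A ∈ H, ((if A ∈ r then (1 : ℝ) else 0) - (n : ℝ) / N) =
      ∑ j ∈ Finset.range (k + 1),
        (Nat.choose k j : ℝ) *
          ((Nat.descFactorial n j : ℝ) / (Nat.descFactorial N j : ℝ)) *
          (-(n : ℝ) / N) ^ (k - j) :=
  corr_formula_general N n k hn H hH hcard
end

section
/- Let k be an even positive integer. If f_N → f for some f ∈ (0,1) as N → ∞, then lim_{N→∞} N^{k/2} · Corr_N(k) = (f(f−1))^{k/2} · k!/(2^{k/2} (k/2)!), i.e. the limit equals (f(f−1))^{k/2} · E Z^k. -/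
/-!
Every sample of size `ν = f_N N` has exactly `ν` members, so the centred indicators
`1_{A ∈ r} - f_N` sum to zero over the population. Multiplying this identity by the product over
the first `k` individuals and summing over samples gives, by exchangeability of the individuals
and `(1_{A ∈ r} - f)^2 = (1 - 2f)(1_{A ∈ r} - f) + f(1 - f)`, the three-term recursion
`(N - k) Corr(k+1) = -k ((1 - 2f_N) Corr(k) + f_N (1 - f_N) Corr(k-1))`.
Scaled by `N ^ ⌈k/2⌉`, an odd correlation is one order of `N` smaller than the even one
following it, so in the limit `L(k+2) = (k+1) f(f-1) L(k)` for even `k`, whence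
`L(k) = (f(f-1))^{k/2} (k-1)!!`.
-/

open Filter Finset

section SampleSum

variable {α : Type*} [DecidableEq α]

noncomputable def sampleSum (U : Finset α) (ν : ℕ) (c : ℝ) (s : Finset α) : ℝ :=
  ∑ r ∈ U.powersetCard ν, ∏ a ∈ s, ((if a ∈ r then (1 : ℝ) else 0) - c)

theorem sampleSum_map_perm {U : Finset α} {σ : Equiv.Perm α} (hσ : U.map σ.toEmbedding = U)
    (ν : ℕ) (c : ℝ) (s : Finset α) :
    sampleSum U ν c (s.map σ.toEmbedding) = sampleSum U ν c s := by
  conv_lhs => rw [sampleSum, ← hσ, powersetCard_map, sum_map]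
  simp [sampleSum, prod_map]

theorem Finset.map_swap_eq_self {s : Finset α} {a b : α} (h : a ∈ s ↔ b ∈ s) :
    s.map (Equiv.swap a b).toEmbedding = s := by
  ext x
  rw [mem_map_equiv, Equiv.symm_swap, Equiv.swap_apply_def]
  split_ifs <;> simp_all

variable {U s : Finset α} {a b : α}

theorem sampleSum_insert_eq_insert (ha : a ∈ U) (hb : b ∈ U) (has : a ∉ s) (hbs : b ∉ s)
    (ν : ℕ) (c : ℝ) : sampleSum U ν c (insert a s) = sampleSum U ν c (insert b s) := by
  rw [← sampleSum_map_perm (map_swap_eq_self (iff_of_true ha hb)), map_insert,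
    Equiv.coe_toEmbedding, Equiv.swap_apply_left, map_swap_eq_self (iff_of_false has hbs)]

theorem sampleSum_erase_eq_erase (ha : a ∈ U) (hb : b ∈ U) (has : a ∈ s) (hbs : b ∈ s)
    (ν : ℕ) (c : ℝ) : sampleSum U ν c (s.erase a) = sampleSum U ν c (s.erase b) := by
  rw [← sampleSum_map_perm (map_swap_eq_self (iff_of_true ha hb)), map_erase,
    Equiv.coe_toEmbedding, Equiv.swap_apply_left, map_swap_eq_self (iff_of_true has hbs)]

theorem sum_indicator_sub_eq_zero {ν : ℕ} {r : Finset α} (hr : r ∈ U.powersetCard ν) :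
    ∑ x ∈ U, ((if x ∈ r then (1 : ℝ) else 0) - ν / #U) = 0 := by
  rw [mem_powersetCard] at hr
  rcases U.eq_empty_or_nonempty with rfl | hU
  · simp
  rw [sum_sub_distrib, sum_ite_mem, inter_eq_right.2 hr.1, sum_const, sum_const, hr.2,
    nsmul_eq_mul, nsmul_eq_mul, mul_one, mul_div_cancel₀ _ (by simpa using hU.ne_empty), sub_self]

theorem sum_centred_mul_prod_of_mem (hA : a ∈ s) (ν : ℕ) (c : ℝ) :
    ∑ r ∈ U.powersetCard ν, ((if a ∈ r then (1 : ℝ) else 0) - c) *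
      ∏ b ∈ s, ((if b ∈ r then (1 : ℝ) else 0) - c) =
      (1 - 2 * c) * sampleSum U ν c s + c * (1 - c) * sampleSum U ν c (s.erase a) := by
  simp only [sampleSum, mul_sum, ← sum_add_distrib]
  refine sum_congr rfl fun r _ => ?_
  rw [← mul_prod_erase _ _ hA]
  split_ifs <;> ring

end SampleSum

section Correlation

variable {N ν k : ℕ}

theorem sampleSum_range_succ (hk : k < N) :
    (N - k : ℝ) * sampleSum (range N) ν (ν / N) (range (k + 1)) =
      -k * ((1 - 2 * (ν / N)) * sampleSum (range N) ν (ν / N) (range k)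
        + ν / N * (1 - ν / N) * sampleSum (range N) ν (ν / N) (range (k - 1))) := by
  set c : ℝ := ν / N
  have htotal : ∑ A ∈ range N, ∑ r ∈ (range N).powersetCard ν,
      ((if A ∈ r then (1 : ℝ) else 0) - c) * ∏ B ∈ range k, ((if B ∈ r then 1 else 0) - c)
      = 0 := by
    rw [sum_comm]
    refine sum_eq_zero fun r hr => ?_
    rw [← sum_mul, mul_eq_zero]
    left
    simpa only [card_range] using sum_indicator_sub_eq_zero hr
  have hout : ∀ A ∈ Ico k N, ∑ r ∈ (range N).powersetCard ν,
      ((if A ∈ r then (1 : ℝ) else 0) - c) * ∏ B ∈ range k, ((if B ∈ r then 1 else 0) - c)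
      = sampleSum (range N) ν c (range (k + 1)) := by
    intro A hA
    obtain ⟨hkA, hAN⟩ := mem_Ico.1 hA
    have hA' : A ∉ range k := by simpa using hkA
    rw [range_add_one, ← sampleSum_insert_eq_insert (by simpa) (by simpa using hk) hA'
      notMem_range_self ν c]
    exact sum_congr rfl fun r _ =>
      (prod_insert (f := fun B => (if B ∈ r then (1 : ℝ) else 0) - c) hA').symm
  have hin : ∀ A ∈ range k, ∑ r ∈ (range N).powersetCard ν,
      ((if A ∈ r then (1 : ℝ) else 0) - c) * ∏ B ∈ range k, ((if B ∈ r then 1 else 0) - c)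
      = (1 - 2 * c) * sampleSum (range N) ν c (range k) +
        c * (1 - c) * sampleSum (range N) ν c (range (k - 1)) := by
    intro A hA
    have hAk := mem_range.1 hA
    have hlast : (range k).erase (k - 1) = range (k - 1) := by ext; simp; omega
    rw [sum_centred_mul_prod_of_mem hA, ← hlast, sampleSum_erase_eq_erase (b := k - 1)
      (mem_range.2 (hAk.trans hk)) (mem_range.2 (by omega)) hA (mem_range.2 (by omega))]
  rw [← sum_range_add_sum_Ico _ hk.le, sum_congr rfl hin, sum_congr rfl hout, sum_const,
    sum_const, card_range, Nat.card_Ico, nsmul_eq_mul, nsmul_eq_mul, Nat.cast_sub hk.le] at htotal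
  linarith

noncomputable def corr (N ν k : ℕ) : ℝ :=
  (N.choose ν : ℝ)⁻¹ * sampleSum (range N) ν (ν / N) (range k)

theorem corr_zero (h : ν ≤ N) : corr N ν 0 = 1 := by
  simp [corr, sampleSum, (Nat.choose_pos h).ne']

theorem corr_succ (hk : k < N) :
    corr N ν (k + 1) = -k / (N - k) *
      ((1 - 2 * (ν / N)) * corr N ν k + ν / N * (1 - ν / N) * corr N ν (k - 1)) := by
  have hNk : (N - k : ℝ) ≠ 0 := sub_ne_zero.2 (by exact_mod_cast hk.ne')
  rw [div_mul_eq_mul_div, eq_div_iff hNk]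
  simp only [corr]
  linear_combination (N.choose ν : ℝ)⁻¹ * sampleSum_range_succ (ν := ν) hk

theorem corr_one (hN : 0 < N) : corr N ν 1 = 0 := by
  simpa using corr_succ (ν := ν) hN

end Correlation

noncomputable def corrLimit (f : ℝ) : ℕ → ℝ
  | 0 => 1
  | 1 => 0
  | k + 2 => -(k + 1) *
      ((1 - 2 * f) * (if Even k then 0 else corrLimit f (k + 1)) + f * (1 - f) * corrLimit f k)

theorem tendsto_pow_mul_corr (n : ℕ → ℕ) (hn : ∀ N, n N ≤ N) {f : ℝ}
    (hconv : Tendsto (fun N : ℕ => (n N : ℝ) / N) atTop (nhds f)) (k : ℕ) :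
    Tendsto (fun N : ℕ => (N : ℝ) ^ ((k + 1) / 2) * corr N (n N) k) atTop
      (nhds (corrLimit f k)) := by
  induction k using Nat.twoStepInduction with
  | zero => exact tendsto_const_nhds.congr fun N => by simp [corr_zero (hn N), corrLimit]
  | one =>
    refine tendsto_const_nhds.congr' ?_
    filter_upwards [eventually_gt_atTop 0] with N hN
    simp [corr_one hN, corrLimit]
  | more k ih ih1 =>
    have hnext : Tendsto (fun N : ℕ => (N : ℝ) ^ ((k + 1) / 2) * corr N (n N) (k + 1)) atTop
        (nhds (if Even k then 0 else corrLimit f (k + 1))) := by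
      rcases Nat.even_or_odd k with he | ho
      · have h := ih1.mul (tendsto_inv_atTop_zero.comp tendsto_natCast_atTop_atTop)
        rw [mul_zero] at h
        rw [if_pos he]
        refine h.congr' ?_
        filter_upwards [eventually_ne_atTop 0] with N hN
        rw [show (k + 1 + 1) / 2 = (k + 1) / 2 + 1 by grind, pow_succ]
        simp only [Function.comp_apply]
        field_simp
      · rw [if_neg (Nat.not_even_iff_odd.2 ho)]
        convert ih1 using 4
        grind
    have hlim := (((tendsto_natCast_div_add_atTop (-(k + 1 : ℝ))).const_mul (-(k + 1 : ℝ))).mul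
      ((((tendsto_const_nhds (x := (1 : ℝ))).sub (hconv.const_mul 2)).mul hnext).add
        ((hconv.mul ((tendsto_const_nhds (x := (1 : ℝ))).sub hconv)).mul ih)))
    rw [mul_one] at hlim
    rw [corrLimit]
    refine hlim.congr' ?_
    filter_upwards [eventually_gt_atTop (k + 1)] with N hN
    rw [corr_succ hN, Nat.add_sub_cancel, show (k + 2 + 1) / 2 = (k + 1) / 2 + 1 by omega, pow_succ]
    push_cast
    simp only [← sub_eq_add_neg]
    field_simp

open Nat in
theorem corrLimit_two_mul (f : ℝ) (m : ℕ) :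
    corrLimit f (2 * m) = (f * (f - 1)) ^ m * ((2 * m)! / (2 ^ m * m !)) := by
  induction m with
  | zero => simp [corrLimit]
  | succ m ih =>
    rw [mul_add_one, corrLimit, if_pos (even_two_mul m), ih, factorial_succ, factorial_succ,
      factorial_succ]
    push_cast
    field_simp
    ring

theorem corr_limit_even_general (n : ℕ → ℕ) (hn : ∀ N, n N ≤ N) (f : ℝ)
    (hconv : Tendsto (fun N : ℕ => (n N : ℝ) / N) atTop (nhds f))
    (k : ℕ) (hk : Even k) :
    Tendsto
      (fun N : ℕ => (N : ℝ) ^ (k / 2) *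
        ((Nat.choose N (n N) : ℝ)⁻¹ *
          ∑ r ∈ (Finset.range N).powersetCard (n N),
            ∏ A ∈ Finset.range k, ((if A ∈ r then (1 : ℝ) else 0) - (n N : ℝ) / N)))
      atTop
      (nhds ((f * (f - 1)) ^ (k / 2) *
        ((Nat.factorial k : ℝ) / (2 ^ (k / 2) * (Nat.factorial (k / 2) : ℝ))))) := by
  obtain ⟨m, rfl⟩ := hk
  have h := tendsto_pow_mul_corr n hn hconv (m + m)
  rw [← two_mul, corrLimit_two_mul, show (2 * m + 1) / 2 = m by omega] at h
  rw [← two_mul, show 2 * m / 2 = m by omega]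
  exact h

/-- Let `k` be an even positive integer.  If the sampling fractions
`f_N = n_N/N` converge to some `f ∈ (0,1)` as `N → ∞`, then
`lim_{N→∞} N^{k/2} · Corr_N(k) = (f(f−1))^{k/2} · k!/(2^{k/2} (k/2)!)`,
i.e. the limit equals `(f(f−1))^{k/2} · E Z^k` for a standard normal `Z`.  Here
`Corr_N(k) = C(N,n_N)⁻¹ · Σ_{r ⊆ {1,…,N}, |r|=n_N} ∏_{A=1}^{k} (1_{A∈r} − f_N)`,
with the population `{1,…,N}` modelled as `Finset.range N` and the first `k`
individuals as `Finset.range k`. -/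
theorem corr_limit_even (n : ℕ → ℕ) (hn : ∀ N, n N ≤ N) (f : ℝ)
    (hf : f ∈ Set.Ioo (0 : ℝ) 1)
    (hconv : Tendsto (fun N : ℕ => (n N : ℝ) / N) atTop (nhds f))
    (k : ℕ) (hk : Even k) (hk0 : 0 < k) :
    Tendsto
      (fun N : ℕ => (N : ℝ) ^ (k / 2) *
        ((Nat.choose N (n N) : ℝ)⁻¹ *
          ∑ r ∈ (Finset.range N).powersetCard (n N),
            ∏ A ∈ Finset.range k, ((if A ∈ r then (1 : ℝ) else 0) - (n N : ℝ) / N)))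
      atTop
      (nhds ((f * (f - 1)) ^ (k / 2) *
        ((Nat.factorial k : ℝ) / (2 ^ (k / 2) * (Nat.factorial (k / 2) : ℝ))))) :=
  corr_limit_even_general n hn f hconv k hk
end

section
/- For all nonnegative integers k, m and j with 0 ≤ k−m+1 ≤ j ≤ k, one has P_{k,m}(j) = 0. -/
/-- `P k m j` is the rational number `P_{k,m}(j)` defined by `P_{k,0}(j) = 1` and
`P_{k,m}(j) = Σ_{q=1}^{k−m} q·P_{k,m−1}(q+1) − Σ_{q=1}^{j−1} q·P_{k,m−1}(q+1)` for
`m ≥ 1` (empty sums are `0`). -/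
def P (k : ℕ) : ℕ → ℕ → ℚ
  | 0, _ => 1
  | m + 1, j =>
      (∑ q ∈ Finset.Icc 1 (k - (m + 1)), (q : ℚ) * P k m (q + 1)) -
      ∑ q ∈ Finset.Icc 1 (j - 1), (q : ℚ) * P k m (q + 1)

/-! Subtracting the two sums in the recursion leaves only the terms with
`k - (m + 1) < q < j`, and these vanish by induction on `m` because `q + 1` then lies in the
window `[k + 1 - m, k]` for the previous level. -/

open Finset

theorem P_succ_eq_neg_sum_Ioc {k m j : ℕ} (h : k - (m + 1) ≤ j - 1) :
    P k (m + 1) j = -∑ q ∈ Ioc (k - (m + 1)) (j - 1), (q : ℚ) * P k m (q + 1) := by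
  have Icc_one_eq_Ioc_zero (n : ℕ) : Icc 1 n = Ioc 0 n := Icc_add_one_left_eq_Ioc 0 n
  rw [P, Icc_one_eq_Ioc_zero, Icc_one_eq_Ioc_zero, ← sum_Ioc_consecutive _ (Nat.zero_le _) h]
  ring

theorem P_eq_zero_of_sub_le {k m j : ℕ} (hj : k + 1 - m ≤ j) (hjk : j ≤ k) : P k m j = 0 := by
  induction m generalizing j with
  | zero => omega
  | succ m ih =>
    rw [P_succ_eq_neg_sum_Ioc (by omega), neg_eq_zero]
    refine sum_eq_zero fun q hq => ?_
    rw [mem_Ioc] at hq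
    rw [ih (by omega) (by omega), mul_zero]

theorem P_eq_zero_general (k m j : ℕ)
    (h1 : (k : ℤ) - m + 1 ≤ j) (h2 : j ≤ k) : P k m j = 0 :=
  P_eq_zero_of_sub_le (by omega) h2

/-- For all nonnegative integers `k`, `m` and `j` with
`0 ≤ k−m+1 ≤ j ≤ k`, one has `P_{k,m}(j) = 0`. -/
theorem P_eq_zero (k m j : ℕ) (h0 : 0 ≤ (k : ℤ) - m + 1)
    (h1 : (k : ℤ) - m + 1 ≤ j) (h2 : j ≤ k) : P k m j = 0 :=
  P_eq_zero_general k m j h1 h2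
end

section
/- For all integers k and m with 1 ≤ m ≤ k there exists a single-variable polynomial r (depending on k and m) with rational coefficients of degree at most max(2m−2,0), such that for every integer j with 0 ≤ j ≤ k: P_{k,m}(j) = (−1)^m ( j^{2m} + (1/3) m (2m−5) j^{2m−1} ) / (2^m m!) + r(j). -/
open Polynomial Finset

namespace Polynomial

variable {R : Type*}

theorem sum_mul_eq_of_natDegree_le [Semiring R] {p : R[X]} {n : ℕ} (hp : p.natDegree ≤ n + 1)
    {c : ℕ → R} (hc : ∀ i < n, c i = 0) :
    p.sum (fun i a => a * c i) = p.coeff n * c n + p.coeff (n + 1) * c (n + 1) := by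
  rw [sum_over_range' _ (fun _ => zero_mul _) (n + 2) (by omega), sum_range_succ, sum_range_succ,
    sum_eq_zero fun i hi => by rw [hc i (mem_range.1 hi), mul_zero], zero_add]

theorem natDegree_sub_two_leading_terms_le [Ring R] {p : R[X]} {n : ℕ}
    (hp : p.natDegree ≤ n + 2) :
    (p - C (p.coeff (n + 2)) * X ^ (n + 2) - C (p.coeff (n + 1)) * X ^ (n + 1)).natDegree ≤ n := by
  refine natDegree_le_iff_coeff_eq_zero.2 fun N hN => ?_
  simp only [coeff_sub, coeff_C_mul_X_pow]
  obtain rfl | rfl | hlt : N = n + 1 ∨ N = n + 2 ∨ n + 2 < N := by omega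
  · simp
  · simp
  · rw [coeff_eq_zero_of_natDegree_lt (hp.trans_lt hlt), if_neg (by omega), if_neg (by omega)]
    simp

theorem coeff_taylor_eq_sum [CommSemiring R] (r : R) (f : R[X]) (k : ℕ) :
    (taylor r f).coeff k = f.sum fun i a => a * (i.choose k * r ^ (i - k)) := by
  rw [taylor_coeff, hasseDeriv_apply, eval_sum]
  congr 1
  ext i a
  rw [eval_monomial]
  ring

theorem coeff_taylor_of_natDegree_le [Semiring R] (r : R) {f : R[X]} {n : ℕ}
    (hf : f.natDegree ≤ n) : (taylor r f).coeff n = f.coeff n := by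
  obtain hlt | rfl := hf.lt_or_eq
  · rw [coeff_eq_zero_of_natDegree_lt hlt,
      coeff_eq_zero_of_natDegree_lt (by rwa [natDegree_taylor])]
  · exact coeff_taylor_natDegree r f

theorem coeff_taylor_of_natDegree_le_succ [CommSemiring R] (r : R) {f : R[X]} {n : ℕ}
    (hf : f.natDegree ≤ n + 1) :
    (taylor r f).coeff n = f.coeff n + (n + 1) * r * f.coeff (n + 1) := by
  rw [coeff_taylor_eq_sum, sum_mul_eq_of_natDegree_le hf
    fun i hi => by rw [Nat.choose_eq_zero_of_lt hi, Nat.cast_zero, zero_mul]]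
  simp only [Nat.choose_self, Nat.choose_succ_self_right, Nat.sub_self, Nat.add_sub_cancel_left]
  push_cast
  ring

theorem natDegree_X_mul_taylor_le [Semiring R] (r : R) (p : R[X]) :
    (X * taylor r p).natDegree ≤ p.natDegree + 1 := by
  refine natDegree_mul_le.trans ?_
  rw [natDegree_taylor, add_comm]
  exact Nat.add_le_add_left natDegree_X_le _

/-- The discrete antiderivative: `(sumRange p).eval n = Σ_{q<n} p.eval q`, by Faulhaber's formula
`(i + 1) Σ_{q<n} qⁱ = Bᵢ₊₁(n) - Bᵢ₊₁(0)`. -/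
noncomputable def sumRange (p : ℚ[X]) : ℚ[X] :=
  p.sum fun i a => C (a / (i + 1)) * (bernoulli (i + 1) - C (_root_.bernoulli (i + 1)))

theorem eval_sumRange (p : ℚ[X]) (n : ℕ) :
    (sumRange p).eval (n : ℚ) = ∑ q ∈ range n, p.eval (q : ℚ) := by
  have hterm (i : ℕ) (a : ℚ) : (C (a / (i + 1)) * (bernoulli (i + 1)
      - C (_root_.bernoulli (i + 1)))).eval (n : ℚ) = ∑ q ∈ range n, a * (q : ℚ) ^ i := by
    rw [eval_mul, eval_C, eval_sub, eval_C, ← sum_range_pow_eq_bernoulli_sub, ← mul_sum]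
    field_simp
  rw [sumRange, eval_sum]
  simp only [hterm, eval_eq_sum, sum_def]
  exact sum_comm

theorem coeff_sumRange (p : ℚ[X]) {t : ℕ} (ht : t ≠ 0) :
    (sumRange p).coeff t = p.sum fun i a => a * ((bernoulli (i + 1)).coeff t / (i + 1)) := by
  simp only [sumRange, coeff_sum, coeff_C_mul, coeff_sub, coeff_C, ht, if_false, sub_zero]
  congr 1
  ext i a
  ring

theorem natDegree_sumRange_le {p : ℚ[X]} {n : ℕ} (hp : p.natDegree ≤ n) :
    (sumRange p).natDegree ≤ n + 1 := by
  refine natDegree_le_iff_coeff_eq_zero.2 fun N hN => ?_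
  rw [coeff_sumRange p (by omega), sum_over_range' _ (fun _ => zero_mul _) (n + 1) (by omega)]
  refine sum_eq_zero fun i hi => ?_
  rw [coeff_bernoulli, if_neg (by simp at hi; omega), zero_div, mul_zero]

theorem coeff_sumRange_of_natDegree_le_succ {p : ℚ[X]} {n : ℕ} (hp : p.natDegree ≤ n + 1) :
    (sumRange p).coeff (n + 1) = p.coeff n / (n + 1) - p.coeff (n + 1) / 2 := by
  rw [coeff_sumRange p n.succ_ne_zero, sum_mul_eq_of_natDegree_le hp fun i hi => by
    rw [coeff_bernoulli, if_neg (by omega), zero_div]]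
  simp only [coeff_bernoulli, le_refl, Nat.le_succ, if_true, Nat.sub_self,
    Nat.add_sub_cancel_left, _root_.bernoulli_zero, _root_.bernoulli_one, Nat.choose_self,
    Nat.choose_succ_self_right]
  push_cast
  field_simp
  ring

theorem coeff_sumRange_of_natDegree_le {p : ℚ[X]} {n : ℕ} (hp : p.natDegree ≤ n) :
    (sumRange p).coeff (n + 1) = p.coeff n / (n + 1) := by
  rw [coeff_sumRange_of_natDegree_le_succ (by omega),
    coeff_eq_zero_of_natDegree_lt (show p.natDegree < n + 1 by omega), zero_div, sub_zero]

end Polynomial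

namespace P

theorem succ_eq_sub_sum (k m j : ℕ) :
    P k (m + 1) j = P k (m + 1) 0 - ∑ q ∈ range j, (q : ℚ) * P k m (q + 1) := by
  have hsum : ∑ q ∈ Icc 1 (j - 1), (q : ℚ) * P k m (q + 1)
      = ∑ q ∈ range j, (q : ℚ) * P k m (q + 1) :=
    sum_subset (fun q hq => by simp at hq ⊢; omega) fun q hq hq' => by
      obtain rfl : q = 0 := by simp at hq hq'; omega
      rw [Nat.cast_zero, zero_mul]
  simp [P, hsum]

noncomputable def poly (k : ℕ) : ℕ → ℚ[X]
  | 0 => 1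
  | m + 1 => C (P k (m + 1) 0) - sumRange (X * taylor 1 (poly k m))

theorem eq_eval_poly (k m j : ℕ) : P k m j = (poly k m).eval (j : ℚ) := by
  induction m generalizing j with
  | zero => simp [P, poly]
  | succ m ih =>
    rw [succ_eq_sub_sum, poly, eval_sub, eval_C, eval_sumRange]
    congr 1
    refine sum_congr rfl fun q _ => ?_
    rw [ih, eval_mul, eval_X, taylor_eval]
    push_cast
    ring

theorem natDegree_poly_le (k m : ℕ) : (poly k m).natDegree ≤ 2 * m := by
  induction m with
  | zero => simp [poly]
  | succ m ih =>
    refine (natDegree_sub_le _ _).trans (max_le (by simp) ?_)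
    exact (natDegree_sumRange_le (n := 2 * m + 1)
      ((natDegree_X_mul_taylor_le 1 _).trans (by omega))).trans (by omega)

theorem coeff_poly_succ (k m : ℕ) {t : ℕ} (ht : t ≠ 0) :
    (poly k (m + 1)).coeff t = -(sumRange (X * taylor 1 (poly k m))).coeff t := by
  rw [poly, coeff_sub, coeff_C, if_neg ht, zero_sub]

theorem coeff_poly_succ_of_natDegree_le {k m n : ℕ} (h : (poly k m).natDegree ≤ n) :
    (poly k (m + 1)).coeff (n + 2) = -(poly k m).coeff n / (n + 2) := by
  rw [coeff_poly_succ k m (by omega), coeff_sumRange_of_natDegree_le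
    ((natDegree_X_mul_taylor_le 1 _).trans (by omega)), coeff_X_mul,
    coeff_taylor_of_natDegree_le 1 h]
  push_cast
  ring

theorem coeff_poly_succ_of_natDegree_le_succ {k m n : ℕ} (h : (poly k m).natDegree ≤ n + 1) :
    (poly k (m + 1)).coeff (n + 2) = (poly k m).coeff (n + 1) / 2
      - ((poly k m).coeff n + (n + 1) * (poly k m).coeff (n + 1)) / (n + 2) := by
  rw [coeff_poly_succ k m (by omega), coeff_sumRange_of_natDegree_le_succ
    ((natDegree_X_mul_taylor_le 1 _).trans (by omega)), coeff_X_mul, coeff_X_mul,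
    coeff_taylor_of_natDegree_le_succ 1 h, coeff_taylor_of_natDegree_le 1 h]
  push_cast
  ring

noncomputable def lead (m : ℕ) : ℚ := (-1) ^ m / (2 ^ m * m.factorial)

noncomputable def sublead (m : ℕ) : ℚ := lead m * m * (2 * m - 5) / 3

theorem lead_succ (m : ℕ) : lead (m + 1) = -lead m / (2 * m + 2) := by
  simp only [lead, pow_succ, Nat.factorial_succ]
  push_cast
  field_simp

theorem sublead_succ (m : ℕ) :
    sublead (m + 1) = lead m / 2 - (2 * m * lead m + sublead m) / (2 * m + 1) := by
  simp only [sublead, lead_succ]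
  push_cast
  field_simp
  ring

theorem coeff_poly_two_mul (k m : ℕ) : (poly k m).coeff (2 * m) = lead m := by
  induction m with
  | zero => simp [poly, lead]
  | succ m ih =>
    rw [show 2 * (m + 1) = 2 * m + 2 by ring,
      coeff_poly_succ_of_natDegree_le (natDegree_poly_le k m), ih, lead_succ]
    push_cast
    ring

theorem coeff_poly_two_mul_add_one (k m : ℕ) :
    (poly k (m + 1)).coeff (2 * m + 1) = sublead (m + 1) := by
  induction m with
  | zero =>
    rw [coeff_poly_succ k 0 (t := 0 + 1) one_ne_zero, coeff_sumRange_of_natDegree_le_succ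
      ((natDegree_X_mul_taylor_le 1 (poly k 0)).trans (by simp [poly])), coeff_X_mul_zero,
      coeff_X_mul]
    norm_num [poly, sublead, lead]
  | succ m ih =>
    have hdeg : (poly k (m + 1)).natDegree ≤ 2 * m + 1 + 1 := natDegree_poly_le k (m + 1)
    rw [show 2 * (m + 1) + 1 = 2 * m + 1 + 2 by ring, coeff_poly_succ_of_natDegree_le_succ hdeg,
      ih, show 2 * m + 1 + 1 = 2 * (m + 1) by ring, coeff_poly_two_mul, sublead_succ (m + 1)]
    push_cast
    ring

end P

theorem P_leading_terms_general (k m : ℕ) (hm : 1 ≤ m) :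
    ∃ r : Polynomial ℚ, r.natDegree ≤ 2 * m - 2 ∧
      ∀ j : ℕ, j ≤ k →
        P k m j =
          (-1 : ℚ) ^ m *
              ((j : ℚ) ^ (2 * m) +
                (1 / 3 : ℚ) * (m : ℚ) * (2 * (m : ℚ) - 5) * (j : ℚ) ^ (2 * m - 1)) /
              (2 ^ m * (Nat.factorial m : ℚ)) +
            r.eval (j : ℚ) := by
  obtain ⟨n, rfl⟩ := Nat.exists_eq_add_of_le' hm
  have htop : (P.poly k (n + 1)).coeff (2 * n + 2) = P.lead (n + 1) := P.coeff_poly_two_mul k _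
  have hnext := P.coeff_poly_two_mul_add_one k n
  refine ⟨P.poly k (n + 1) - C (P.lead (n + 1)) * X ^ (2 * n + 2)
    - C (P.sublead (n + 1)) * X ^ (2 * n + 1), ?_, fun j _ => ?_⟩
  · rw [← htop, ← hnext, show 2 * (n + 1) - 2 = 2 * n by omega]
    exact natDegree_sub_two_leading_terms_le (P.natDegree_poly_le k _)
  · rw [P.eq_eval_poly, show 2 * (n + 1) - 1 = 2 * n + 1 by omega, P.sublead, P.lead]
    simp only [eval_sub, eval_mul, eval_C, eval_pow, eval_X]
    field_simp
    ring

/-- For all integers `k` and `m` with `1 ≤ m ≤ k` there exists a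
single-variable polynomial `r` over `ℚ` (depending on `k` and `m`) of degree at most
`max(2m−2,0)` (note `2*m - 2` is truncated natural subtraction), such that for every
integer `j` with `0 ≤ j ≤ k`:
`P_{k,m}(j) = (−1)^m (j^{2m} + (1/3) m (2m−5) j^{2m−1}) / (2^m m!) + r(j)`. -/
theorem P_leading_terms (k m : ℕ) (hm : 1 ≤ m) (hmk : m ≤ k) :
    ∃ r : Polynomial ℚ, r.natDegree ≤ 2 * m - 2 ∧
      ∀ j : ℕ, j ≤ k →
        P k m j =
          (-1 : ℚ) ^ m *
              ((j : ℚ) ^ (2 * m) +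
                (1 / 3 : ℚ) * (m : ℚ) * (2 * (m : ℚ) - 5) * (j : ℚ) ^ (2 * m - 1)) /
              (2 ^ m * (Nat.factorial m : ℚ)) +
            r.eval (j : ℚ) :=
  P_leading_terms_general k m hm
end

section
/- For every integer v ≥ 1 there exists a single-variable polynomial r_v (depending only on v) with rational coefficients of degree at most max(2v−2,0), such that for every integer j with j ≥ v: P_{j,v}(1) = ( j^{2v} − (1/3) v (2v+1) j^{2v−1} ) / (2^v v!) + r_v(j). -/
/-!
`P_{k,m}(j)` is the elementary symmetric function `e_m(j, …, k-1)`: both satisfy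
`f_{m+1}(j) = j f_m(j+1) + f_{m+1}(j+1)` and vanish at `j = k - m`. So `P_{j,v}(1) = e_v(0, …, j-1)`,
and expanding by the largest element, `e_{m+1}(0, …, n-1) = Σ_{q<n} q e_m(0, …, q-1)`.
By Faulhaber's formula, `n ↦ Σ_{q<n} q f(q)` turns a polynomial `f = a X^d + b X^(d-1) + …` into
one with leading terms `a/(d+2) X^(d+2) + (b/(d+1) - a/2) X^(d+1)`; starting from
`e_1(0, …, n-1) = n(n-1)/2`, induction on `m` gives the two leading coefficients of `e_m`.
-/

open Finset Polynomial
open scoped Nat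

namespace Multiset

variable {R : Type*} [CommSemiring R]

theorem esymm_zero (s : Multiset R) : s.esymm 0 = 1 := by
  simp [esymm]

theorem esymm_eq_zero_of_card_lt {s : Multiset R} {n : ℕ} (h : card s < n) : s.esymm n = 0 := by
  simp [esymm, powersetCard_eq_empty _ h]

theorem esymm_cons_succ (a : R) (s : Multiset R) (n : ℕ) :
    (a ::ₘ s).esymm (n + 1) = a * s.esymm n + s.esymm (n + 1) := by
  simp only [esymm, powersetCard_cons, map_add, sum_add, map_map, Function.comp_def, prod_cons,
    sum_map_mul_left]
  ring

theorem esymm_map_range_succ (f : ℕ → R) (m n : ℕ) :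
    ((range n).map f).esymm (m + 1) = ∑ q ∈ Finset.range n, f q * ((range q).map f).esymm m := by
  induction n with
  | zero => exact esymm_eq_zero_of_card_lt (by simp)
  | succ n ih => rw [range_succ, map_cons, esymm_cons_succ, ih, Finset.sum_range_succ, add_comm]

theorem esymm_map_Ico_one {f : ℕ → R} (hf : f 0 = 0) (m n : ℕ) :
    ((Finset.Ico 1 n).val.map f).esymm (m + 1) = ((range n).map f).esymm (m + 1) := by
  rcases n.eq_zero_or_pos with rfl | hn
  · rfl
  · rw [← Finset.range_val, Finset.range_eq_Ico, ← Finset.insert_Ico_add_one_left_eq_Ico hn,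
      Finset.insert_val_of_notMem (by simp), map_cons, esymm_cons_succ, hf, zero_mul, zero_add,
      zero_add]

end Multiset

theorem P_succ_of_pos {k m j : ℕ} (hj : 1 ≤ j) :
    P k (m + 1) j = j * P k m (j + 1) + P k (m + 1) (j + 1) := by
  obtain ⟨i, rfl⟩ := Nat.exists_eq_add_of_le' hj
  simp only [P, Nat.add_sub_cancel, sum_Icc_succ_top (Nat.le_add_left 1 i)]
  ring

theorem P_succ_sub_self (k m : ℕ) : P k (m + 1) (k - m) = 0 := by
  rw [P, show k - m - 1 = k - (m + 1) by omega, sub_self]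

theorem P_eq_esymm_Ico {k m j : ℕ} (hj : 1 ≤ j) (hjk : j + m ≤ k + 1) :
    P k m j = ((Ico j k).val.map ((↑) : ℕ → ℚ)).esymm m := by
  induction m generalizing j with
  | zero => simp [P, Multiset.esymm_zero]
  | succ m ih =>
    have hjk' : j ≤ k - m := by omega
    clear hjk
    induction hjk' using Nat.decreasingInduction with
    | self =>
      rw [P_succ_sub_self, Multiset.esymm_eq_zero_of_card_lt (by simp; omega)]
    | of_succ j hlt ih' =>
      rw [P_succ_of_pos hj, ih' (by omega), ih (by omega) (by omega),
        ← insert_Ico_add_one_left_eq_Ico (show j < k by omega),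
        insert_val_of_notMem (by simp), Multiset.map_cons, Multiset.esymm_cons_succ]

namespace Polynomial

noncomputable def faulhaber (e : ℕ) : ℚ[X] :=
  C ((e : ℚ) + 1)⁻¹ * (bernoulli (e + 1) - C (_root_.bernoulli (e + 1)))

theorem faulhaber_eval (e n : ℕ) : (faulhaber e).eval (n : ℚ) = ∑ k ∈ range n, (k : ℚ) ^ e := by
  rw [faulhaber, eval_mul, eval_C, eval_sub, eval_C, ← sum_range_pow_eq_bernoulli_sub,
    inv_mul_cancel_left₀ (by positivity)]

theorem coeff_faulhaber {e i : ℕ} (hi : i ≠ 0) :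
    (faulhaber e).coeff i =
      if i ≤ e + 1 then _root_.bernoulli (e + 1 - i) * (e + 1).choose i / (e + 1) else 0 := by
  rw [faulhaber, coeff_C_mul, coeff_sub, coeff_C, if_neg hi, sub_zero, coeff_bernoulli]
  split_ifs <;> ring

theorem natDegree_faulhaber_le (e : ℕ) : (faulhaber e).natDegree ≤ e + 1 :=
  natDegree_le_iff_coeff_eq_zero.mpr fun i hi => by
    rw [coeff_faulhaber (by omega), if_neg (by omega)]

theorem coeff_faulhaber_succ (e : ℕ) : (faulhaber e).coeff (e + 1) = 1 / (e + 1) := by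
  rw [coeff_faulhaber e.succ_ne_zero, if_pos le_rfl, Nat.sub_self, Nat.choose_self]
  simp

theorem coeff_faulhaber_self {e : ℕ} (he : e ≠ 0) : (faulhaber e).coeff e = -1 / 2 := by
  rw [coeff_faulhaber he, if_pos (by omega), Nat.add_sub_cancel_left, _root_.bernoulli_one,
    Nat.choose_succ_self_right]
  push_cast
  field_simp

theorem exists_eval_eq_sum_range_mul (p : ℚ[X]) (d : ℕ) (hp : p.natDegree ≤ d + 1) :
    ∃ Q : ℚ[X], Q.natDegree ≤ d + 3 ∧ Q.coeff (d + 3) = p.coeff (d + 1) / (d + 3) ∧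
      Q.coeff (d + 2) = -p.coeff (d + 1) / 2 + p.coeff d / (d + 2) ∧
      ∀ n : ℕ, Q.eval (n : ℚ) = ∑ q ∈ range n, (q : ℚ) * p.eval (q : ℚ) := by
  set Q := ∑ i ∈ range (d + 2), C (p.coeff i) * faulhaber (i + 1)
  have coeff_Q (k : ℕ) (hk : d + 2 ≤ k) :
      Q.coeff k = p.coeff d * (faulhaber (d + 1)).coeff k +
        p.coeff (d + 1) * (faulhaber (d + 2)).coeff k := by
    rw [finsetSum_coeff, sum_range_succ, sum_range_succ, sum_eq_zero, zero_add]
    · simp only [coeff_C_mul]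
    · intro i hi
      rw [coeff_C_mul, coeff_eq_zero_of_natDegree_lt (p := faulhaber (i + 1)), mul_zero]
      exact (natDegree_faulhaber_le _).trans_lt (by rw [mem_range] at hi; omega)
  refine ⟨Q, ?_, ?_, ?_, fun n => ?_⟩
  · refine natDegree_sum_le_of_forall_le _ _ fun i hi => ?_
    refine (natDegree_C_mul_le _ _).trans ((natDegree_faulhaber_le _).trans ?_)
    rw [mem_range] at hi; omega
  · rw [coeff_Q _ (by omega), coeff_faulhaber_succ,
      coeff_eq_zero_of_natDegree_lt ((natDegree_faulhaber_le _).trans_lt (by omega))]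
    push_cast; ring
  · rw [coeff_Q _ le_rfl, coeff_faulhaber_succ, coeff_faulhaber_self (by omega)]
    push_cast; ring
  · simp only [Q, eval_finsetSum, eval_mul, eval_C, faulhaber_eval, mul_sum]
    rw [sum_comm]
    refine sum_congr rfl fun q _ => ?_
    rw [eval_eq_sum_range' (show p.natDegree < d + 2 by omega), mul_sum]
    exact sum_congr rfl fun i _ => by ring

theorem natDegree_sub_two_leading_le {R : Type*} [Ring R] {p : R[X]} {n : ℕ}
    (hp : p.natDegree ≤ n + 2) :
    (p - C (p.coeff (n + 2)) * X ^ (n + 2) - C (p.coeff (n + 1)) * X ^ (n + 1)).natDegree ≤ n := by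
  refine natDegree_le_iff_coeff_eq_zero.mpr fun i hi => ?_
  simp only [coeff_sub, coeff_C_mul_X_pow]
  obtain rfl | rfl | hi' : i = n + 1 ∨ i = n + 2 ∨ n + 2 < i := by omega
  · simp
  · simp
  · rw [coeff_eq_zero_of_natDegree_lt (hp.trans_lt hi'), if_neg (by omega), if_neg (by omega)]
    simp

end Polynomial

theorem exists_eval_eq_esymm_range (m : ℕ) :
    ∃ p : ℚ[X], p.natDegree ≤ 2 * m + 2 ∧
      p.coeff (2 * m + 2) = 1 / (2 ^ (m + 1) * (m + 1)! : ℚ) ∧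
      p.coeff (2 * m + 1) =
        -(1 / 3) * (m + 1 : ℚ) * (2 * m + 3) / (2 ^ (m + 1) * (m + 1)! : ℚ) ∧
      ∀ n : ℕ, p.eval (n : ℚ) = ((Multiset.range n).map ((↑) : ℕ → ℚ)).esymm (m + 1) := by
  induction m with
  | zero =>
    refine ⟨faulhaber 1, natDegree_faulhaber_le 1, ?_, ?_, fun n => ?_⟩
    · norm_num [coeff_faulhaber_succ]
    · norm_num [coeff_faulhaber_self]
    · simp [faulhaber_eval, Multiset.esymm_map_range_succ, Multiset.esymm_zero]
  | succ m ih =>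
    obtain ⟨p, hdeg, htop, hsnd, heval⟩ := ih
    obtain ⟨Q, hQdeg, hQtop, hQsnd, hQeval⟩ := exists_eval_eq_sum_range_mul p (2 * m + 1) hdeg
    refine ⟨Q, hQdeg, ?_, ?_, fun n => ?_⟩
    · rw [show 2 * (m + 1) + 2 = 2 * m + 1 + 3 by ring, hQtop, htop, Nat.factorial_succ (m + 1)]
      push_cast
      field_simp
      ring
    · rw [show 2 * (m + 1) + 1 = 2 * m + 1 + 2 by ring, hQsnd, htop, hsnd,
        Nat.factorial_succ (m + 1)]
      push_cast
      field_simp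
      ring
    · rw [hQeval, Multiset.esymm_map_range_succ]
      simp only [heval]

/-- For every integer `v ≥ 1` there exists a single-variable
polynomial `r_v` over `ℚ` (depending only on `v`) of degree at most `max(2v−2,0)`
(note `2*v - 2` is truncated natural subtraction), such that for every integer
`j ≥ v`:
`P_{j,v}(1) = (j^{2v} − (1/3) v (2v+1) j^{2v−1}) / (2^v v!) + r_v(j)`. -/
theorem P_at_one_leading_terms (v : ℕ) (hv : 1 ≤ v) :
    ∃ r : Polynomial ℚ, r.natDegree ≤ 2 * v - 2 ∧
      ∀ j : ℕ, v ≤ j →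
        P j v 1 =
          ((j : ℚ) ^ (2 * v) -
              (1 / 3 : ℚ) * (v : ℚ) * (2 * (v : ℚ) + 1) * (j : ℚ) ^ (2 * v - 1)) /
              (2 ^ v * (Nat.factorial v : ℚ)) +
            r.eval (j : ℚ) := by
  obtain ⟨m, rfl⟩ := Nat.exists_eq_add_of_le' hv
  obtain ⟨p, hdeg, htop, hsnd, heval⟩ := exists_eval_eq_esymm_range m
  refine ⟨p - C (p.coeff (2 * m + 2)) * X ^ (2 * m + 2) - C (p.coeff (2 * m + 1)) * X ^ (2 * m + 1),
    by simpa [Nat.mul_succ] using natDegree_sub_two_leading_le hdeg, fun j hj => ?_⟩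
  rw [P_eq_esymm_Ico le_rfl (by omega), Multiset.esymm_map_Ico_one Nat.cast_zero, ← heval]
  simp only [eval_sub, eval_mul, eval_C, eval_pow, eval_X, htop, hsnd,
    show 2 * (m + 1) = 2 * m + 2 by ring, show 2 * m + 2 - 1 = 2 * m + 1 by omega]
  push_cast
  ring
end

section
/- Let m ≥ 1 be an integer and let α, δ, γ, β be real numbers with γ ≠ 0 such that β/γ is not a nonpositive integer. Then Σ_{n=0}^{m−1} (−1)^n C(m−1,n) · (αn+δ)/(γn+β) = (α/γ)·δ(m−1) + (Γ(m) Γ(β/γ)/Γ(m+β/γ)) · (1/γ)(δ − αβ/γ), where δ(m−1) equals 1 if m = 1 and 0 otherwise, and Γ denotes the Gamma function. -/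
/-!
Split each term into partial fractions: with `x = β/γ`,
`(αn + δ)/(γn + β) = α/γ + (1/γ)(δ - αβ/γ) / (x + n)`.
The constant part is killed by `∑ (-1)^n C(M,n) = δ(M)`, while
`∑ (-1)^n C(M,n) / (x + n) = M! / (x (x+1) ⋯ (x+M))` by induction on `M`: Pascal's rule turns
the sum for `M + 1` into the difference of the sums for `M` at `x` and at `x + 1`.
Finally `M! / (x (x+1) ⋯ (x+M)) = Γ(M+1) Γ(x) / Γ(x+M+1)` by the functional equation of `Γ`.
-/

open Finset Nat

section AlternatingBinomialSums

variable {R : Type*} [CommRing R]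

theorem sum_range_neg_one_pow_mul_choose (M : ℕ) :
    ∑ n ∈ range (M + 1), (-1 : R) ^ n * (M.choose n : R) = if M = 0 then 1 else 0 := by
  have h := congrArg (Int.cast : ℤ → R) (Int.alternating_sum_range_choose (n := M))
  rw [Int.cast_sum, apply_ite Int.cast, Int.cast_one, Int.cast_zero] at h
  simpa using h

theorem sum_range_succ_alternating_choose_mul (M : ℕ) (g : ℕ → R) :
    ∑ n ∈ range (M + 2), (-1) ^ n * ((M + 1).choose n : R) * g n =
      ∑ n ∈ range (M + 1), (-1) ^ n * (M.choose n : R) * (g n - g (n + 1)) := by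
  set a : ℕ → R := fun n => (-1) ^ n * (M.choose n : R) * g n
  have hpascal : ∀ n ∈ range (M + 1),
      (-1) ^ (n + 1) * ((M + 1).choose (n + 1) : R) * g (n + 1) =
        a (n + 1) - (-1) ^ n * (M.choose n : R) * g (n + 1) := by
    intro n _
    simp only [a, choose_succ_succ, cast_add, pow_succ]
    ring
  have htop : ∑ n ∈ range (M + 2), a n = ∑ n ∈ range (M + 1), a n := by
    simp [sum_range_succ _ (M + 1), a]
  calc ∑ n ∈ range (M + 2), (-1) ^ n * ((M + 1).choose n : R) * g n
      = ∑ n ∈ range (M + 1), (a (n + 1) - (-1) ^ n * (M.choose n : R) * g (n + 1)) + a 0 := by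
        rw [sum_range_succ', sum_congr rfl hpascal]
        simp [a]
    _ = ∑ n ∈ range (M + 1), a n -
          ∑ n ∈ range (M + 1), (-1) ^ n * (M.choose n : R) * g (n + 1) := by
        rw [← htop, sum_range_succ' a, sum_sub_distrib]
        ring
    _ = _ := by
        simp only [a, mul_sub, sum_sub_distrib]

end AlternatingBinomialSums

section Field

variable {K : Type*} [Field K]

theorem sum_range_alternating_choose_div_add (M : ℕ) {x : K} (hx : ∀ k ≤ M, x + k ≠ 0) :
    ∑ n ∈ range (M + 1), (-1) ^ n * (M.choose n : K) / (x + n) =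
      M ! / ∏ k ∈ range (M + 1), (x + k) := by
  induction M generalizing x with
  | zero => simp
  | succ M ih =>
    have hx0 : x ≠ 0 := by simpa using hx 0 (zero_le _)
    have hlast : x + 1 + M ≠ 0 := by
      simpa [add_assoc, add_comm (1 : K)] using hx (M + 1) le_rfl
    have hx1 : ∀ k ≤ M, x + 1 + k ≠ 0 := fun k hk => by
      simpa [add_assoc, add_comm (1 : K)] using hx (k + 1) (by omega)
    have hprod : ∏ k ∈ range (M + 1), (x + k) = x * ∏ k ∈ range M, (x + 1 + k) := by
      rw [prod_range_succ', mul_comm]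
      simp [add_assoc, add_comm (1 : K)]
    have hdiff : ∑ n ∈ range (M + 2), (-1) ^ n * ((M + 1).choose n : K) / (x + n) =
        ∑ n ∈ range (M + 1), (-1) ^ n * (M.choose n : K) / (x + n) -
          ∑ n ∈ range (M + 1), (-1) ^ n * (M.choose n : K) / (x + 1 + n) := by
      simp_rw [div_eq_mul_inv, sum_range_succ_alternating_choose_mul, mul_sub, sum_sub_distrib]
      push_cast
      simp_rw [add_assoc x 1, add_comm (1 : K)]
    rw [hdiff, ih (fun k hk => hx k (by omega)), ih hx1, prod_range_succ _ (M + 1), hprod,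
      prod_range_succ, factorial_succ]
    have hP : ∏ k ∈ range M, (x + 1 + k) ≠ 0 :=
      prod_ne_zero_iff.mpr fun k hk => hx1 k (by simp at hk; omega)
    push_cast
    rw [show x + ((M : K) + 1) = x + 1 + M by ring]
    field_simp
    ring

theorem linear_div_linear_eq_div_add_div {a b c d t : K} (hc : c ≠ 0) (ht : d / c + t ≠ 0) :
    (a * t + b) / (c * t + d) = a / c + 1 / c * (b - a * d / c) / (d / c + t) := by
  have hden : c * t + d = c * (d / c + t) := by field_simp; ring
  rw [hden, div_add_div _ _ hc ht, div_eq_div_iff (mul_ne_zero hc ht) (mul_ne_zero hc ht)]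
  field_simp
  ring

end Field

theorem Real.Gamma_add_nat_eq_prod_mul_Gamma {x : ℝ} (n : ℕ) (hx : ∀ k < n, x + k ≠ 0) :
    Real.Gamma (x + n) = (∏ k ∈ range n, (x + k)) * Real.Gamma x := by
  induction n with
  | zero => simp
  | succ n ih =>
    rw [cast_succ, ← add_assoc, Real.Gamma_add_one (hx n (lt_add_one n)),
      ih fun k hk => hx k (by omega), prod_range_succ]
    ring

/-- Let `m ≥ 1` be an integer and let `α`, `δ`, `γ`, `β` be real
numbers with `γ ≠ 0` such that `β/γ` is not a nonpositive integer.  Then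
`Σ_{n=0}^{m−1} (−1)^n C(m−1,n) · (αn+δ)/(γn+β)
  = (α/γ)·δ(m−1) + (Γ(m) Γ(β/γ)/Γ(m+β/γ)) · (1/γ)(δ − αβ/γ)`,
where `δ(m−1)` equals `1` if `m = 1` and `0` otherwise, and `Γ` is the Gamma
function. -/
theorem binomial_sum_gamma_general (m : ℕ) (hm : 1 ≤ m) (α δ γ β : ℝ)
    (hγ : γ ≠ 0) (hβγ : ∀ n : ℕ, β / γ ≠ -(n : ℝ)) :
    ∑ n ∈ Finset.range m,
        (-1 : ℝ) ^ n * (Nat.choose (m - 1) n : ℝ) *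
          ((α * n + δ) / (γ * n + β)) =
      α / γ * (if m = 1 then (1 : ℝ) else 0) +
        Real.Gamma m * Real.Gamma (β / γ) / Real.Gamma ((m : ℝ) + β / γ) *
          ((1 / γ) * (δ - α * β / γ)) := by
  obtain ⟨M, rfl⟩ : ∃ M, m = M + 1 := ⟨m - 1, by omega⟩
  set x := β / γ
  set c := 1 / γ * (δ - α * β / γ)
  have hx : ∀ k : ℕ, x + k ≠ 0 := fun k h => hβγ k (by linarith)
  have hΓ : Real.Gamma (M + 1) * Real.Gamma x / Real.Gamma ((M + 1 : ℕ) + x) =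
      M ! / ∏ k ∈ range (M + 1), (x + k) := by
    rw [add_comm _ x, Real.Gamma_add_nat_eq_prod_mul_Gamma _ fun k _ => hx k,
      Real.Gamma_nat_eq_factorial, mul_div_mul_right _ _ (Real.Gamma_ne_zero hβγ)]
  calc ∑ n ∈ range (M + 1), (-1 : ℝ) ^ n * (M + 1 - 1).choose n *
        ((α * n + δ) / (γ * n + β))
      = ∑ n ∈ range (M + 1),
          (α / γ * ((-1) ^ n * M.choose n) + c * ((-1) ^ n * M.choose n / (x + n))) := by
        refine sum_congr rfl fun n _ => ?_
        rw [Nat.add_sub_cancel, linear_div_linear_eq_div_add_div hγ (hx n)]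
        ring
    _ = α / γ * (if M = 0 then 1 else 0) + c * (M ! / ∏ k ∈ range (M + 1), (x + k)) := by
        rw [sum_add_distrib, ← mul_sum, ← mul_sum, sum_range_neg_one_pow_mul_choose,
          sum_range_alternating_choose_div_add M fun k _ => hx k]
    _ = _ := by
        rw [← hΓ]
        simp only [Nat.cast_succ, Nat.add_eq_right]
        ring
end

section
/- Fix integers N ≥ 1 and k ≥ 0, and regard α_{N,k}(f) as a Laurent polynomial in f over ℚ. Then for every integer v with 0 ≤ v ≤ k, the coefficient of f^{k−v} in α_{N,k}(f) equals (−1)^k Σ_{m=v}^{k+v} ( Σ_{j=0}^{k} C(k,j) (−1)^{j+m} P_{j,v}(1) P_{k,m−v}(j) ) N^{k−m}. -/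
open LaurentPolynomial in
/-- The Laurent polynomial (in the indeterminate `f = T 1`) over `ℚ`
`α_{N,k}(f) = (−f)^k Σ_{j=0}^{k} C(k,j) (−1)^j f^{−j} (fN)_j (N−j)_{k−j}`, where
`(fN)_j = ∏_{i=0}^{j−1} (fN − i)` and `(N−j)_{k−j} = ∏_{i=0}^{k−j−1} (N−j−i)` is a
rational constant. -/
noncomputable def alphaL (N k : ℕ) : LaurentPolynomial ℚ :=
  (-T 1) ^ k *
    ∑ j ∈ Finset.range (k + 1),
      C ((Nat.choose k j : ℚ) * (-1) ^ j) * T (-(j : ℤ)) *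
        (∏ i ∈ Finset.range j, (C (N : ℚ) * T 1 - C (i : ℚ))) *
        C (∏ i ∈ Finset.range (k - j), ((N : ℚ) - (j : ℚ) - (i : ℚ)))

open Finset LaurentPolynomial

theorem P_zero_eq_P_one (k m : ℕ) : P k m 0 = P k m 1 := by
  cases m <;> simp [P]

theorem P_succ (k m j : ℕ) : P k (m + 1) j = P k (m + 1) (j + 1) + j * P k m (j + 1) := by
  rcases j with _ | j
  · simp [P]
  · simp only [P, Nat.add_sub_cancel, sum_Icc_succ_top (Nat.le_add_left 1 j)]
    push_cast
    ring

theorem P_eq_zero_s17 {k m j : ℕ} (hm : 1 ≤ m) (hj : j ≤ k) (hkj : k < m + j) : P k m j = 0 := by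
  induction m generalizing j with
  | zero => omega
  | succ m ih =>
    have hsub : Icc 1 (k - (m + 1)) ⊆ Icc 1 (j - 1) := Icc_subset_Icc_right (by omega)
    rw [P, ← neg_sub, ← sum_sdiff_eq_sub hsub, neg_eq_zero]
    refine sum_eq_zero fun q hq => ?_
    simp only [mem_sdiff, mem_Icc, not_and, not_le] at hq
    rw [ih (by omega) (by omega) (by omega), mul_zero]

theorem P_one_eq_zero_of_lt {j v : ℕ} (h : j < v) : P j v 1 = 0 := by
  rcases j with _ | j
  · obtain ⟨v, rfl⟩ := Nat.exists_eq_add_of_lt h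
    simp [P]
  · exact P_eq_zero_s17 (by omega) (by omega) (by omega)

theorem prod_Ico_sub_natCast {R : Type*} [CommRing R] [Algebra ℚ R] (y : R) {j k : ℕ}
    (hjk : j ≤ k) :
    ∏ i ∈ Ico j k, (y - i) =
      ∑ m ∈ range (k - j + 1), algebraMap ℚ R ((-1) ^ m * P k m j) * y ^ (k - j - m) := by
  obtain ⟨d, rfl⟩ := Nat.exists_eq_add_of_le hjk
  induction d generalizing j with
  | zero => simp [P]
  | succ n ih =>
    set K := j + (n + 1)
    set b := fun m => algebraMap ℚ R ((-1) ^ m * P K m (j + 1))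
    have hK : K = j + 1 + n := by omega
    have hvanish : b (n + 1) = 0 := by
      simp [b, P_eq_zero_s17 (k := K) (m := n + 1) (j := j + 1) le_add_self (by omega) (by omega)]
    have hshift : y * ∑ m ∈ range (n + 1), b m * y ^ (n - m) =
        ∑ m ∈ range (n + 2), b m * y ^ (n + 1 - m) := by
      rw [sum_range_succ _ (n + 1), hvanish, zero_mul, add_zero, mul_sum]
      refine sum_congr rfl fun m hm => ?_
      rw [Nat.sub_add_comm (Nat.lt_succ_iff.mp (mem_range.mp hm)), pow_succ]
      ring
    rw [prod_eq_prod_Ico_succ_bot (by omega), hK, ih le_self_add, ← hK,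
      show K - (j + 1) = n by omega, show K - j = n + 1 by omega, sub_mul, hshift,
      sum_range_succ', sum_range_succ' _ (n + 1), mul_sum, ← sub_add_eq_add_sub, ← sum_sub_distrib]
    congr 1
    refine sum_congr rfl fun m _ => ?_
    rw [P_succ]
    simp only [b, Nat.add_sub_add_right, map_mul, map_add, map_natCast, map_pow, map_neg, map_one]
    ring

theorem prod_range_sub_natCast {R : Type*} [CommRing R] [Algebra ℚ R] (y : R) (j : ℕ) :
    ∏ i ∈ range j, (y - i) =
      ∑ w ∈ range (j + 1), algebraMap ℚ R ((-1) ^ w * P j w 1) * y ^ (j - w) := by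
  rw [range_eq_Ico, prod_Ico_sub_natCast y (Nat.zero_le j)]
  simp [P_zero_eq_P_one]

theorem coeff_sum_C_mul_T_sub {R : Type*} [Semiring R] (s : Finset ℕ) (b : ℕ → R) (k v : ℕ) :
    (∑ w ∈ s, C (b w) * T ((k : ℤ) - w)).coeff ((k : ℤ) - v) = if v ∈ s then b v else 0 := by
  simp [← single_eq_C_mul_T, Finsupp.finsetSum_apply, Finsupp.single_apply]

def alphaCoeff (N k j w : ℕ) : ℚ :=
  (-1) ^ k * k.choose j * (-1) ^ (j + w) * P j w 1 * N ^ (j - w) *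
    ∏ i ∈ range (k - j), ((N : ℚ) - j - i)

theorem alphaL_eq_sum (N k : ℕ) :
    alphaL N k = ∑ j ∈ range (k + 1), ∑ w ∈ range (j + 1),
      C (alphaCoeff N k j w) * T ((k : ℤ) - w) := by
  rw [alphaL, mul_sum]
  refine sum_congr rfl fun j _ => ?_
  simp_rw [map_natCast (C : ℚ →+* ℚ[T;T⁻¹])]
  rw [prod_range_sub_natCast]
  simp_rw [← C_eq_algebraMap, mul_sum, sum_mul, mul_sum]
  refine sum_congr rfl fun w hw => ?_
  rw [show (k : ℤ) - w = k + -j + (j - w : ℕ) by grind, T_add, T_add, neg_pow (T 1 : ℚ[T;T⁻¹])]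
  simp only [alphaCoeff, map_mul, map_pow, map_neg, map_one, map_natCast, mul_pow, T_pow, mul_one,
    pow_add]
  ring

theorem ite_alphaCoeff_eq (N k : ℕ) {j : ℕ} (hj : j ≤ k) (v : ℕ) :
    (if v ∈ range (j + 1) then alphaCoeff N k j v else 0) =
      ∑ m ∈ Icc v (k + v), (-1 : ℚ) ^ k *
        ((k.choose j : ℚ) * (-1) ^ (j + m) * P j v 1 * P k (m - v) j * (N : ℚ) ^ ((k : ℤ) - m)) := by
  rcases lt_or_ge j v with hjv | hvj
  · rw [if_neg (by simpa using hjv)]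
    simp [P_one_eq_zero_of_lt hjv]
  have hconst : ∏ i ∈ range (k - j), ((N : ℚ) - j - i) =
      ∑ m ∈ range (k - j + 1), (-1) ^ m * P k m j * (N : ℚ) ^ (k - j - m) := by
    simpa [prod_Ico_eq_prod_range, sub_sub] using prod_Ico_sub_natCast (N : ℚ) hj
  rw [if_pos (mem_range.2 (by omega)), alphaCoeff, hconst, ← Ico_add_one_right_eq_Icc,
    sum_Ico_eq_sum_range, show k + v + 1 - v = k + 1 by omega, mul_sum,
    ← sum_subset (range_subset_range.2 (show k - j + 1 ≤ k + 1 by omega))]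
  · refine sum_congr rfl fun m hm => ?_
    rw [show (k : ℤ) - (v + m : ℕ) = ((j - v + (k - j - m) : ℕ) : ℤ) by grind, zpow_natCast,
      Nat.add_sub_cancel_left]
    ring
  · intro m _ hm
    rw [P_eq_zero_s17 (by grind) hj (by grind)]
    simp

theorem alpha_coeff_general (N k : ℕ) (v : ℕ) :
    (alphaL N k).coeff ((k : ℤ) - (v : ℤ)) =
      (-1 : ℚ) ^ k *
        ∑ m ∈ Finset.Icc v (k + v),
          (∑ j ∈ Finset.range (k + 1),
              (Nat.choose k j : ℚ) * (-1 : ℚ) ^ (j + m) * P j v 1 * P k (m - v) j) *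
            (N : ℚ) ^ ((k : ℤ) - (m : ℤ)) := by
  rw [alphaL_eq_sum, AddMonoidAlgebra.coeff_sum, Finsupp.finsetSum_apply]
  simp_rw [coeff_sum_C_mul_T_sub, sum_mul, mul_sum]
  rw [sum_comm]
  exact sum_congr rfl fun j hj => ite_alphaCoeff_eq N k (Nat.lt_succ_iff.mp (mem_range.mp hj)) v

/-- Fix integers `N ≥ 1` and `k ≥ 0`, and regard `α_{N,k}(f)` as a
Laurent polynomial in `f` over `ℚ`.  Then for every integer `v` with `0 ≤ v ≤ k`, the
coefficient of `f^{k−v}` in `α_{N,k}(f)` equals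
`(−1)^k Σ_{m=v}^{k+v} (Σ_{j=0}^{k} C(k,j) (−1)^{j+m} P_{j,v}(1) P_{k,m−v}(j)) N^{k−m}`. -/
theorem alpha_coeff (N k : ℕ) (hN : 1 ≤ N) (v : ℕ) (hv : v ≤ k) :
    (alphaL N k).coeff ((k : ℤ) - (v : ℤ)) =
      (-1 : ℚ) ^ k *
        ∑ m ∈ Finset.Icc v (k + v),
          (∑ j ∈ Finset.range (k + 1),
              (Nat.choose k j : ℚ) * (-1 : ℚ) ^ (j + m) * P j v 1 * P k (m - v) j) *
            (N : ℚ) ^ ((k : ℤ) - (m : ℤ)) :=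
  alpha_coeff_general N k v
end

section
/- Let k ≥ 2 be an even integer and let v be an integer with 0 ≤ v ≤ k. For N ≥ k set c_{N,k,v} = (coefficient of f^{k−v} in α_{N,k}(f)) / (N)_k. Then lim_{N→∞} N^{k/2} c_{N,k,v} = (−1)^v C(k/2, v) · k!/(2^{k/2} (k/2)!) when 0 ≤ v ≤ k/2, and lim_{N→∞} N^{k/2} c_{N,k,v} = 0 when k/2 < v ≤ k. (Here k!/(2^{k/2}(k/2)!) = E Z^k, the k-th moment of a standard normal random variable.) -/
/-!
Put `w = 1/N`. Since `f^{-j} (fN)_j = ∏_{i<j} (N - i f⁻¹)` and `(N-j)_{k-j} = ∏_{j≤i<k} (N - i)`,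
the coefficient of `f^{k-v}` in `α_{N,k}` is `(-1)^k N^k w^v G_v(w)` with
`G_v(w) = ∑_j (-1)^j C(k,j) a_v(j) ∏_{j≤i<k} (1 - i w)`, where `a_v(j)` and `b_r(j)` are the
coefficients of `X^v` in `∏_{i<j} (1 - i X)` and of `X^r` in `∏_{j≤i<k} (1 - i X)`.
As functions of `j` these are polynomials of degrees `2v` and `2r`, with leading coefficients
`(-1)^v / (2^v v!)` and `1 / (2^r r!)`: their forward differences in `j` are `-j a_{v-1}(j)` and
`j b_{r-1}(j+1)`. So the coefficient of `w^r` in `G_v`, a `k`-th finite difference of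
`a_v b_r`, vanishes for `2(v + r) < k` and is `k!` times the product of the leading coefficients
for `2(v + r) = k`. For `k = 2h` this makes `N^h c_{N,k,v} = (N^k / (N)_k) H(1/N)` for a
polynomial `H` whose constant term is the claimed limit.
-/

open Filter

/-- `c_{N,k,v}` is the coefficient of `f^{k−v}` in `α_{N,k}(f)` divided by the falling
factorial `(N)_k = N(N−1)⋯(N−k+1)`. -/
noncomputable def c (N k v : ℕ) : ℚ :=
  (alphaL N k).coeff ((k : ℤ) - (v : ℤ)) / (Nat.descFactorial N k : ℚ)

open Polynomial Finset Nat

namespace Polynomial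

theorem sum_range_neg_one_pow_mul_choose_mul_eval {R : Type*} [CommRing R] {k : ℕ} (p : R[X])
    (hp : p.natDegree ≤ k) :
    ∑ j ∈ range (k + 1), (-1) ^ j * (k.choose j : R) * p.eval (j : R) =
      (-1) ^ k * k ! * p.coeff k := by
  have hΔ : (fwdDiff 1)^[k] p.eval 0 = k ! * p.coeff k := by
    rcases hp.lt_or_eq with hlt | rfl
    · rw [p.fwdDiff_iter_eq_zero_of_degree_lt hlt, coeff_eq_zero_of_natDegree_lt hlt]
      simp
    · rw [p.fwdDiff_iter_degree_eq_factorial]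
      simp [mul_comm]
  rw [fwdDiff_iter_eq_sum_shift] at hΔ
  rw [mul_assoc, ← hΔ, mul_sum]
  refine sum_congr rfl fun j hj => ?_
  obtain ⟨m, rfl⟩ := Nat.exists_eq_add_of_le (mem_range_succ_iff.mp hj)
  simp only [zsmul_eq_mul, zero_add, nsmul_eq_mul, mul_one, Nat.add_sub_cancel_left]
  push_cast
  have hm : ((-1 : R) ^ m) * (-1) ^ m = 1 := by rw [← mul_pow, neg_one_mul, neg_neg, one_pow]
  linear_combination (-(-1) ^ j * (j + m).choose j * p.eval (j : R)) * hm

theorem coeff_taylor_of_natDegree_le_s18 {R : Type*} [CommSemiring R] {p : R[X]} {n : ℕ} (r : R)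
    (hp : p.natDegree ≤ n) : (taylor r p).coeff n = p.coeff n := by
  rcases hp.lt_or_eq with hlt | rfl
  · have htaylor : (taylor r p).natDegree < n := by rwa [natDegree_taylor]
    rw [coeff_eq_zero_of_natDegree_lt hlt, coeff_eq_zero_of_natDegree_lt htaylor]
  · exact coeff_taylor_natDegree (r := r) (f := p)

theorem coeff_mul_one_sub_C_mul_X_succ {R : Type*} [CommRing R] (p : R[X]) (a : R) (r : ℕ) :
    (p * (1 - C a * X)).coeff (r + 1) = p.coeff (r + 1) - a * p.coeff r := by
  rw [mul_sub, mul_one, coeff_sub, mul_left_comm, coeff_C_mul, coeff_mul_X]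

theorem prod_C_sub_C_mul_X_eq {K ι : Type*} [Field K] (s : Finset ι) (a : ι → K) {x : K}
    (hx : x ≠ 0) :
    ∏ i ∈ s, (C x - C (a i) * X) =
      C (x ^ #s) * (∏ i ∈ s, (1 - C (a i) * X)).comp (C x⁻¹ * X) := by
  have hinv : C x * C x⁻¹ = (1 : K[X]) := by rw [← C_mul, mul_inv_cancel₀ hx, C_1]
  rw [prod_comp, map_pow, pow_card_mul_prod]
  refine prod_congr rfl fun i _ => ?_
  simp only [sub_comp, one_comp, mul_comp, C_comp, X_comp]
  linear_combination (C (a i) * X) * hinv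

theorem prod_sub_eq_pow_mul_eval {K ι : Type*} [Field K] (s : Finset ι) (a : ι → K) {x : K}
    (hx : x ≠ 0) : ∏ i ∈ s, (x - a i) = x ^ #s * (∏ i ∈ s, (1 - C (a i) * X)).eval x⁻¹ := by
  simpa [eval_prod, eval_comp] using congrArg (eval 1) (prod_C_sub_C_mul_X_eq s a hx)

theorem exists_eval_add_one_sub_eval (q : ℚ[X]) (d : ℕ) (hq : q.natDegree ≤ d) :
    ∃ p : ℚ[X], (∀ x, p.eval (x + 1) - p.eval x = q.eval x) ∧ p.natDegree ≤ d + 1 ∧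
      p.coeff (d + 1) = q.coeff d / (d + 1) := by
  have hB : ∀ n, (Polynomial.bernoulli n).natDegree ≤ n := fun n =>
    natDegree_le_iff_coeff_eq_zero.mpr fun i hi => by
      rw [coeff_bernoulli, if_neg (by exact_mod_cast hi.not_ge)]
  refine ⟨∑ i ∈ range (d + 1), C (q.coeff i / (i + 1)) * Polynomial.bernoulli (i + 1),
    fun x => ?_, ?_, ?_⟩
  · simp only [eval_finsetSum, eval_mul, eval_C, ← sum_sub_distrib, ← mul_sub]
    rw [q.eval_eq_sum_range' (by omega : q.natDegree < d + 1)]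
    refine sum_congr rfl fun i _ => ?_
    rw [add_comm x 1, bernoulli_eval_one_add]
    push_cast
    field_simp
    ring
  · refine natDegree_sum_le_of_forall_le _ _ fun i hi => ?_
    exact (natDegree_C_mul_le _ _).trans ((hB _).trans (by simp at hi; omega))
  · rw [finsetSum_coeff, sum_eq_single d]
    · simp [coeff_bernoulli]
    · intro i hi _
      rw [coeff_C_mul, coeff_bernoulli, if_neg (by simp at hi; omega), mul_zero]
    · simp

theorem exists_natDegree_le_eval_eq_of_sub_eq (n d : ℕ) (g : ℕ → ℚ) (q : ℚ[X])
    (hq : q.natDegree ≤ d) (hg : ∀ j < n, g (j + 1) - g j = q.eval (j : ℚ)) :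
    ∃ p : ℚ[X], p.natDegree ≤ d + 1 ∧ p.coeff (d + 1) = q.coeff d / (d + 1) ∧
      ∀ j ≤ n, p.eval (j : ℚ) = g j := by
  obtain ⟨p, hp, hdeg, hcoeff⟩ := exists_eval_add_one_sub_eval q d hq
  refine ⟨p + C (g 0 - p.eval 0), natDegree_add_C.trans_le hdeg, by simp [hcoeff], ?_⟩
  intro j hj
  induction j with
  | zero => simp
  | succ j ih =>
    have hstep := hp j
    have hgj := hg j (by omega)
    have hj' := ih (by omega)
    simp only [eval_add, eval_C] at hj' ⊢
    push_cast
    linarith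

end Polynomial

theorem LaurentPolynomial.coeff_toLaurent_natCast {R : Type*} [Semiring R] (p : R[X]) (n : ℕ) :
    (toLaurent p).coeff (n : ℤ) = p.coeff n := by
  rw [coeff_toLaurent]
  exact Finsupp.mapDomain_apply Nat.castEmbedding.injective _ n

noncomputable def signedEsymm (s : Finset ℕ) (r : ℕ) : ℚ :=
  (∏ i ∈ s, (1 - C (i : ℚ) * X)).coeff r

theorem signedEsymm_zero (s : Finset ℕ) : signedEsymm s 0 = 1 := by
  simp [signedEsymm, coeff_zero_eq_eval_zero, eval_prod]

theorem signedEsymm_range_succ (j r : ℕ) :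
    signedEsymm (range (j + 1)) (r + 1) =
      signedEsymm (range j) (r + 1) - j * signedEsymm (range j) r := by
  rw [signedEsymm, prod_range_succ, coeff_mul_one_sub_C_mul_X_succ]
  rfl

theorem signedEsymm_Ico_of_lt {j k : ℕ} (hjk : j < k) (r : ℕ) :
    signedEsymm (Ico j k) (r + 1) =
      signedEsymm (Ico (j + 1) k) (r + 1) - j * signedEsymm (Ico (j + 1) k) r := by
  rw [signedEsymm, prod_eq_prod_Ico_succ_bot hjk, mul_comm, coeff_mul_one_sub_C_mul_X_succ]
  rfl

theorem exists_poly_signedEsymm_range (n v : ℕ) :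
    ∃ p : ℚ[X], p.natDegree ≤ 2 * v ∧ p.coeff (2 * v) = (-1) ^ v / (2 ^ v * v !) ∧
      ∀ j ≤ n, p.eval (j : ℚ) = signedEsymm (range j) v := by
  induction v with
  | zero => exact ⟨1, by simp, by simp, fun j _ => by simp [signedEsymm_zero]⟩
  | succ v ih =>
    obtain ⟨p, hdeg, hcoeff, heval⟩ := ih
    obtain ⟨p', hdeg', hcoeff', heval'⟩ := exists_natDegree_le_eval_eq_of_sub_eq n (2 * v + 1)
      (fun j => signedEsymm (range j) (v + 1)) (-(X * p))
      (by rw [natDegree_neg]; exact natDegree_mul_le.trans (by rw [natDegree_X]; omega))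
      (fun j hj => by
        simp only [signedEsymm_range_succ, eval_neg, eval_mul, eval_X, heval j hj.le]
        ring)
    refine ⟨p', hdeg'.trans (by omega), ?_, heval'⟩
    rw [show 2 * (v + 1) = 2 * v + 1 + 1 by ring, hcoeff', coeff_neg, coeff_X_mul, hcoeff,
      factorial_succ]
    push_cast
    field_simp
    ring

theorem exists_poly_signedEsymm_Ico (k r : ℕ) :
    ∃ p : ℚ[X], p.natDegree ≤ 2 * r ∧ p.coeff (2 * r) = 1 / (2 ^ r * r !) ∧
      ∀ j ≤ k, p.eval (j : ℚ) = signedEsymm (Ico j k) r := by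
  induction r with
  | zero => exact ⟨1, by simp, by simp, fun j _ => by simp [signedEsymm_zero]⟩
  | succ r ih =>
    obtain ⟨p, hdeg, hcoeff, heval⟩ := ih
    obtain ⟨p', hdeg', hcoeff', heval'⟩ := exists_natDegree_le_eval_eq_of_sub_eq k (2 * r + 1)
      (fun j => signedEsymm (Ico j k) (r + 1)) (X * taylor 1 p)
      (natDegree_mul_le.trans (by rw [natDegree_X, natDegree_taylor]; omega))
      (fun j hj => by
        simp only [signedEsymm_Ico_of_lt hj, eval_mul, eval_X, taylor_eval]
        rw [← heval (j + 1) hj]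
        push_cast
        ring)
    refine ⟨p', hdeg'.trans (by omega), ?_, heval'⟩
    rw [show 2 * (r + 1) = 2 * r + 1 + 1 by ring, hcoeff', coeff_X_mul,
      coeff_taylor_of_natDegree_le_s18 _ hdeg, hcoeff, factorial_succ]
    push_cast
    field_simp
    ring

noncomputable def alphaCoeffPoly (k v : ℕ) : ℚ[X] :=
  ∑ j ∈ range (k + 1),
    C ((-1) ^ j * k.choose j * signedEsymm (range j) v : ℚ) * ∏ i ∈ Ico j k, (1 - C (i : ℚ) * X)

theorem coeff_alphaCoeffPoly {k v r : ℕ} (hvr : 2 * (v + r) ≤ k) :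
    (alphaCoeffPoly k v).coeff r = if 2 * (v + r) = k then
      (-1 : ℚ) ^ k * k ! * ((-1) ^ v / (2 ^ v * v !)) * (1 / (2 ^ r * r !)) else 0 := by
  obtain ⟨A, hAdeg, hAcoeff, hA⟩ := exists_poly_signedEsymm_range k v
  obtain ⟨B, hBdeg, hBcoeff, hB⟩ := exists_poly_signedEsymm_Ico k r
  have hsum : (alphaCoeffPoly k v).coeff r =
      ∑ j ∈ range (k + 1), (-1) ^ j * (k.choose j : ℚ) * (A * B).eval (j : ℚ) := by
    rw [alphaCoeffPoly, finsetSum_coeff]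
    refine sum_congr rfl fun j hj => ?_
    have hj : j ≤ k := mem_range_succ_iff.mp hj
    rw [coeff_C_mul, eval_mul, hA j hj, hB j hj]
    exact mul_assoc _ _ _
  have hAB : (A * B).natDegree ≤ k := natDegree_mul_le.trans (by omega)
  rw [hsum, sum_range_neg_one_pow_mul_choose_mul_eval _ hAB]
  split_ifs with heq
  · rw [← heq, mul_add, coeff_mul_add_eq_of_natDegree_le hAdeg hBdeg, hAcoeff, hBcoeff]
    ring
  · rw [coeff_eq_zero_of_natDegree_lt (natDegree_mul_le.trans_lt (by omega)), mul_zero]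

open LaurentPolynomial in
theorem alphaL_eq_invert (N k : ℕ) :
    alphaL N k = LaurentPolynomial.C ((-1) ^ k) * T k * invert (toLaurent (∑ j ∈ range (k + 1),
      Polynomial.C ((k.choose j : ℚ) * (-1) ^ j * ∏ i ∈ range (k - j), ((N : ℚ) - j - i)) *
        ∏ i ∈ range j, (Polynomial.C (N : ℚ) - Polynomial.C (i : ℚ) * X))) := by
  have hTT : (T (-1) : ℚ[T;T⁻¹]) * T 1 = 1 := by rw [← T_add]; rfl
  have hshift : ∀ j : ℕ, T (-(j : ℤ)) *
      ∏ i ∈ range j, (LaurentPolynomial.C (N : ℚ) * T 1 - LaurentPolynomial.C (i : ℚ)) =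
      ∏ i ∈ range j, (LaurentPolynomial.C (N : ℚ) - LaurentPolynomial.C (i : ℚ) * T (-1)) := by
    intro j
    rw [show (-(j : ℤ)) = #(range j) * (-1) by simp, ← T_pow, pow_card_mul_prod]
    refine prod_congr rfl fun i _ => ?_
    linear_combination (LaurentPolynomial.C (N : ℚ)) * hTT
  have hsign : (-T 1 : ℚ[T;T⁻¹]) ^ k = LaurentPolynomial.C ((-1) ^ k) * T k := by
    rw [neg_pow, T_pow, mul_one, map_pow, map_neg, map_one]
  rw [alphaL, hsign, mul_sum]
  simp only [map_sum, map_mul, map_prod, map_sub, Polynomial.toLaurent_C, Polynomial.toLaurent_X,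
    invert_C, invert_T, mul_sum]
  refine sum_congr rfl fun j _ => ?_
  linear_combination (LaurentPolynomial.C ((-1) ^ k) * T k * LaurentPolynomial.C (k.choose j : ℚ) *
    LaurentPolynomial.C ((-1) ^ j) * ∏ i ∈ range (k - j),
      (LaurentPolynomial.C (N : ℚ) - LaurentPolynomial.C (j : ℚ) - LaurentPolynomial.C (i : ℚ))) *
    hshift j

theorem coeff_alphaL (N k v : ℕ) (hN : N ≠ 0) :
    (alphaL N k).coeff ((k : ℤ) - v) =
      (-1) ^ k * N ^ k * (N : ℚ)⁻¹ ^ v * (alphaCoeffPoly k v).eval (N : ℚ)⁻¹ := by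
  have hN' : (N : ℚ) ≠ 0 := by exact_mod_cast hN
  rw [alphaL_eq_invert, ← LaurentPolynomial.single_eq_C_mul_T, sub_eq_add_neg,
    AddMonoidAlgebra.coeff_single_mul_add, LaurentPolynomial.invert_apply, neg_neg,
    LaurentPolynomial.coeff_toLaurent_natCast, finsetSum_coeff, alphaCoeffPoly, eval_finsetSum,
    mul_sum, mul_sum]
  refine sum_congr rfl fun j hj => ?_
  have hj : j ≤ k := mem_range_succ_iff.mp hj
  have hlow := congrArg (coeff · v) (prod_C_sub_C_mul_X_eq (range j) (fun i : ℕ => (i : ℚ)) hN')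
  simp only [coeff_C_mul, comp_C_mul_X_coeff, card_range] at hlow
  have hup : ∏ i ∈ range (k - j), ((N : ℚ) - j - i) =
      N ^ (k - j) * (∏ i ∈ Ico j k, (1 - C (i : ℚ) * X)).eval (N : ℚ)⁻¹ := by
    have h := prod_sub_eq_pow_mul_eval (Ico j k) (fun i : ℕ => (i : ℚ)) hN'
    rw [Nat.card_Ico, prod_Ico_eq_prod_range] at h
    rw [← h]
    refine prod_congr rfl fun i _ => ?_
    push_cast
    ring
  rw [coeff_C_mul, hlow, hup, eval_mul, eval_C, signedEsymm,
    ← pow_sub_mul_pow (N : ℚ) hj]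
  ring

theorem exists_poly_pow_mul_coeff_alphaL (h v : ℕ) :
    ∃ H : ℚ[X],
      H.eval 0 = (if v ≤ h then (-1 : ℚ) ^ v * h.choose v * ((2 * h)! / (2 ^ h * h !)) else 0) ∧
      ∀ N : ℕ, N ≠ 0 → (N : ℚ) ^ h * (alphaL N (2 * h)).coeff (((2 * h : ℕ) : ℤ) - v) =
        N ^ (2 * h) * H.eval (N : ℚ)⁻¹ := by
  have hsign : (-1 : ℚ) ^ (2 * h) = 1 := by rw [pow_mul]; norm_num
  by_cases hv : v ≤ h
  · obtain ⟨H, hH⟩ : X ^ (h - v) ∣ alphaCoeffPoly (2 * h) v := X_pow_dvd_iff.mpr fun r hr => by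
      rw [coeff_alphaCoeffPoly (by omega), if_neg (by omega)]
    refine ⟨H, ?_, fun N hN => ?_⟩
    · have hlead := coeff_alphaCoeffPoly (k := 2 * h) (v := v) (r := h - v) (by omega)
      rw [hH, if_pos (by omega), coeff_X_pow_mul', if_pos le_rfl, Nat.sub_self] at hlead
      have h2 : (2 : ℚ) ^ h = 2 ^ v * 2 ^ (h - v) := by rw [← pow_add, Nat.add_sub_cancel' hv]
      rw [if_pos hv, ← coeff_zero_eq_eval_zero, hlead, hsign, Nat.cast_choose ℚ hv, h2]
      field_simp
    · have hN' : (N : ℚ) ≠ 0 := by exact_mod_cast hN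
      have hcancel : (N : ℚ) ^ h * (N : ℚ)⁻¹ ^ v * (N : ℚ)⁻¹ ^ (h - v) = 1 := by
        rw [mul_assoc, ← pow_add, Nat.add_sub_cancel' hv, inv_pow,
          mul_inv_cancel₀ (pow_ne_zero _ hN')]
      rw [coeff_alphaL N _ v hN, hH, eval_mul, eval_pow, eval_X, hsign]
      linear_combination ((N : ℚ) ^ (2 * h) * H.eval (N : ℚ)⁻¹) * hcancel
  · refine ⟨X ^ (v - h) * alphaCoeffPoly (2 * h) v, ?_, fun N hN => ?_⟩
    · simp [if_neg hv, zero_pow (show v - h ≠ 0 by omega)]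
    · have hN' : (N : ℚ) ≠ 0 := by exact_mod_cast hN
      have hcancel : (N : ℚ) ^ h * (N : ℚ)⁻¹ ^ v = (N : ℚ)⁻¹ ^ (v - h) := by
        rw [← pow_sub_mul_pow _ (le_of_not_ge hv), mul_left_comm, ← mul_pow,
          mul_inv_cancel₀ hN', one_pow, mul_one]
      rw [coeff_alphaL N _ v hN, eval_mul, eval_pow, eval_X, hsign]
      linear_combination ((N : ℚ) ^ (2 * h) * (alphaCoeffPoly (2 * h) v).eval (N : ℚ)⁻¹) * hcancel

theorem tendsto_pow_div_descFactorial (k : ℕ) :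
    Tendsto (fun N : ℕ => (N : ℚ) ^ k / N.descFactorial k) atTop (nhds 1) := by
  have hmonic := monic_descPochhammer ℚ k
  have hdeg : (X ^ k : ℚ[X]).degree = (descPochhammer ℚ k).degree := by
    rw [degree_X_pow, degree_eq_natDegree hmonic.ne_zero, descPochhammer_natDegree]
  have h := (div_tendsto_atTop_leadingCoeff_div_of_degree_eq _ _ hdeg).comp
    tendsto_natCast_atTop_atTop
  simpa [Function.comp_def, descPochhammer_eval_eq_descFactorial, hmonic.leadingCoeff] using h

theorem c_limit_even_general (k : ℕ) (hk : Even k) (v : ℕ) :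
    Tendsto (fun N : ℕ => (N : ℝ) ^ (k / 2) * ((c N k v : ℚ) : ℝ)) atTop
      (nhds (if v ≤ k / 2 then
          (-1 : ℝ) ^ v * (Nat.choose (k / 2) v : ℝ) *
            ((Nat.factorial k : ℝ) / (2 ^ (k / 2) * (Nat.factorial (k / 2) : ℝ)))
        else 0)) := by
  obtain ⟨h, rfl⟩ := even_iff_two_dvd.mp hk
  rw [Nat.mul_div_cancel_left h two_pos]
  obtain ⟨H, hH0, hH⟩ := exists_poly_pow_mul_coeff_alphaL h v
  have hlim : Tendsto (fun N : ℕ => (N : ℚ) ^ (2 * h) / N.descFactorial (2 * h) * H.eval (N : ℚ)⁻¹)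
      atTop (nhds (1 * H.eval 0)) :=
    (tendsto_pow_div_descFactorial _).mul
      ((H.continuous.tendsto 0).comp (tendsto_inv_atTop_zero.comp tendsto_natCast_atTop_atTop))
  rw [one_mul, hH0] at hlim
  convert ((Rat.continuous_coe_real.tendsto _).comp hlim).congr' ?_ using 2
  · split_ifs <;> push_cast <;> rfl
  · filter_upwards [eventually_ne_atTop 0] with N hN
    have hq : (N : ℚ) ^ (2 * h) / N.descFactorial (2 * h) * H.eval (N : ℚ)⁻¹ =
        N ^ h * c N (2 * h) v := by
      rw [c, ← mul_div_assoc, hH N hN, div_mul_eq_mul_div]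
    simp only [Function.comp_apply, hq]
    push_cast
    rfl

/-- Let `k ≥ 2` be an even integer and let `v` be an integer with
`0 ≤ v ≤ k`.  With `c_{N,k,v} = (coefficient of f^{k−v} in α_{N,k}(f)) / (N)_k`, one
has `lim_{N→∞} N^{k/2} c_{N,k,v} = (−1)^v C(k/2, v) · k!/(2^{k/2} (k/2)!)` when
`0 ≤ v ≤ k/2`, and `lim_{N→∞} N^{k/2} c_{N,k,v} = 0` when `k/2 < v ≤ k`.
(Here `k!/(2^{k/2}(k/2)!) = E Z^k`, the `k`-th moment of a standard normal.) -/
theorem c_limit_even (k : ℕ) (hk2 : 2 ≤ k) (hk : Even k) (v : ℕ) (hv : v ≤ k) :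
    Tendsto (fun N : ℕ => (N : ℝ) ^ (k / 2) * ((c N k v : ℚ) : ℝ)) atTop
      (nhds (if v ≤ k / 2 then
          (-1 : ℝ) ^ v * (Nat.choose (k / 2) v : ℝ) *
            ((Nat.factorial k : ℝ) / (2 ^ (k / 2) * (Nat.factorial (k / 2) : ℝ)))
        else 0)) :=
  c_limit_even_general k hk v
end
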